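/- Funk parabola of type 4: let y₀ ∈ (−1,1), F = (f₀,g₀) ∈ B², and let P = (x,y) ∈ B² with y ≠ y₀ and P ≠ F. Put ȳ = 1 + sgn(y₀−y)·y, σ₄ = 1 + sgn(y₀−y)·y₀, A = −2σ₄·g₀·sgn(y₀−y), B = −2σ₄·f₀, C = 2σ₄·(1 + sgn(y₀−y)·g₀), D = σ₄²·(f₀² + g₀² − 1). Then ln ρ(y₀,y) = d_F(P,F) holds if and only if ȳ⁴ + x²·ȳ² − 2ȳ³ + A·ȳ² + B·x·ȳ + C·ȳ + D = 0. -/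

import Mathlib

/-!
With `t = ⟪P, Q - P⟫`, `m = ‖Q - P‖²` and `k = t² + (1 - ‖P‖²) m`, one has `⟪Q, Q - P⟫ = t + m`,
`k - t² = (1 - ‖P‖²) m` and `k - (t + m)² = (1 - ‖Q‖²) m`, so both terms of the Funk ratio are
positive. For `0 < b < a` the equation `log (a / b) = d_F(P, Q)` then says `(a - b) √k = a (t + m) - b t`,
and since the other sign is impossible this is equivalent to the squared, radical-free equation.
In the plane, `ρ(y₀, y) = σ₄ / ȳ` with `0 < ȳ < σ₄`, and the squared equation factors as
`m` times the quartic.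
-/

/-- The Funk distance on the open unit ball of Euclidean n-space:
`d_F(P,Q) = ln((√k − ⟨P, Q−P⟩)/(√k − ⟨Q, Q−P⟩))` with
`k = ⟨P, Q−P⟩² + (1 − ‖P‖²)‖Q−P‖²`. -/
noncomputable def funkDist {n : ℕ} (P Q : EuclideanSpace ℝ (Fin n)) : ℝ :=
  Real.log
    ((Real.sqrt ((inner ℝ P (Q - P) : ℝ) ^ 2 + (1 - ‖P‖ ^ 2) * ‖Q - P‖ ^ 2) - (inner ℝ P (Q - P) : ℝ)) /
     (Real.sqrt ((inner ℝ P (Q - P) : ℝ) ^ 2 + (1 - ‖P‖ ^ 2) * ‖Q - P‖ ^ 2) - (inner ℝ Q (Q - P) : ℝ)))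

/-- `ρ(ε,η) = (1 + sgn(ε−η)·ε)/(1 + sgn(ε−η)·η)`. -/
noncomputable def rho (ε η : ℝ) : ℝ :=
  (1 + Real.sign (ε - η) * ε) / (1 + Real.sign (ε - η) * η)

/-- The point `(a,b)` of the Euclidean plane. -/
def pt (a b : ℝ) : EuclideanSpace ℝ (Fin 2) := WithLp.toLp 2 ![a, b]

open Real

section FunkRatio

variable {a b t u k : ℝ}

lemma sub_mul_sqrt_eq_iff_sq_eq (hb : 0 < b) (hab : b < a) (htu : t < u) (htk : t ^ 2 < k) :
    (a - b) * √k = a * u - b * t ↔ (a * u - b * t) ^ 2 = (a - b) ^ 2 * k := by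
  have hk : √k ^ 2 = k := sq_sqrt (by nlinarith)
  constructor
  · intro h
    rw [← h, mul_pow, hk]
  · intro h
    have ht : -t < √k := by nlinarith [sqrt_nonneg k]
    have h₂ : (a * u - b * t) ^ 2 = ((a - b) * √k) ^ 2 := by rw [h, mul_pow, hk]
    rcases sq_eq_sq_iff_eq_or_eq_neg.mp h₂ with h' | h'
    · exact h'.symm
    · -- the negative root would give `a (u + √k) = b (t + √k)`, but `u + √k > t + √k > 0`
      nlinarith [mul_lt_mul_of_pos_right hab (by linarith : 0 < t + √k)]

lemma log_div_eq_log_funk_ratio_iff (hb : 0 < b) (hab : b < a) (htu : t < u) (htk : t ^ 2 < k)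
    (huk : u ^ 2 < k) :
    log (a / b) = log ((√k - t) / (√k - u)) ↔ (a * u - b * t) ^ 2 = (a - b) ^ 2 * k := by
  have hu : 0 < √k - u := by
    nlinarith [sqrt_nonneg k, sq_sqrt (by nlinarith : 0 ≤ k)]
  rw [← sub_mul_sqrt_eq_iff_sq_eq hb hab htu htk,
    log_injOn_pos.eq_iff (div_pos (hb.trans hab) hb) (div_pos (by linarith) hu),
    div_eq_div_iff hb.ne' hu.ne']
  constructor <;> intro h <;> linarith

end FunkRatio

section FunkDist

variable {n : ℕ} (P Q : EuclideanSpace ℝ (Fin n))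

lemma inner_sub_right_eq_inner_add_norm_sq :
    inner ℝ Q (Q - P) = inner ℝ P (Q - P) + ‖Q - P‖ ^ 2 := by
  rw [← real_inner_self_eq_norm_sq, ← inner_add_left, add_sub_cancel]

lemma funk_discriminant_base_independent :
    inner ℝ Q (Q - P) ^ 2 + (1 - ‖Q‖ ^ 2) * ‖Q - P‖ ^ 2
      = inner ℝ P (Q - P) ^ 2 + (1 - ‖P‖ ^ 2) * ‖Q - P‖ ^ 2 := by
  have hQ : ‖Q‖ ^ 2 = ‖P‖ ^ 2 + 2 * inner ℝ P (Q - P) + ‖Q - P‖ ^ 2 := by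
    rw [← norm_add_sq_real, add_sub_cancel]
  rw [inner_sub_right_eq_inner_add_norm_sq, hQ]
  ring

theorem log_div_eq_funkDist_iff {a b : ℝ} (hb : 0 < b) (hab : b < a) (hP : ‖P‖ < 1) (hQ : ‖Q‖ < 1)
    (hPQ : P ≠ Q) :
    log (a / b) = funkDist P Q ↔
      (a * inner ℝ Q (Q - P) - b * inner ℝ P (Q - P)) ^ 2
        = (a - b) ^ 2 * (inner ℝ P (Q - P) ^ 2 + (1 - ‖P‖ ^ 2) * ‖Q - P‖ ^ 2) := by
  have hm : 0 < ‖Q - P‖ ^ 2 := by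
    have := sub_ne_zero.mpr hPQ.symm
    positivity
  have hP2 : ‖P‖ ^ 2 < 1 := by nlinarith [norm_nonneg P]
  have hQ2 : ‖Q‖ ^ 2 < 1 := by nlinarith [norm_nonneg Q]
  apply log_div_eq_log_funk_ratio_iff hb hab
  · rw [inner_sub_right_eq_inner_add_norm_sq]
    linarith
  · nlinarith
  · nlinarith [funk_discriminant_base_independent P Q]

end FunkDist

lemma pt_sub (a b c d : ℝ) : pt a b - pt c d = pt (a - c) (b - d) := by
  ext i; fin_cases i <;> simp [pt]

lemma inner_pt (a b c d : ℝ) : inner ℝ (pt a b) (pt c d) = a * c + b * d := by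
  simp [pt, PiLp.inner_apply, Fin.sum_univ_two, mul_comm]

lemma norm_pt_sq (a b : ℝ) : ‖pt a b‖ ^ 2 = a ^ 2 + b ^ 2 := by
  rw [← real_inner_self_eq_norm_sq, inner_pt]; ring

lemma funk_parabola_quartic_factor (x y f g s σ Y : ℝ) (hs : s = -1 ∨ s = 1) (hY : Y = 1 + s * y) :
    (σ * (f * (f - x) + g * (g - y)) - Y * (x * (f - x) + y * (g - y))) ^ 2
        - (σ - Y) ^ 2 * ((x * (f - x) + y * (g - y)) ^ 2
          + (1 - (x ^ 2 + y ^ 2)) * ((f - x) ^ 2 + (g - y) ^ 2))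
      = ((f - x) ^ 2 + (g - y) ^ 2) *
          (Y ^ 4 + x ^ 2 * Y ^ 2 - 2 * Y ^ 3 + -2 * σ * g * s * Y ^ 2 + -2 * σ * f * x * Y
            + 2 * σ * (1 + s * g) * Y + σ ^ 2 * (f ^ 2 + g ^ 2 - 1)) := by
  subst hY
  rcases hs with rfl | rfl <;> ring

theorem funk_parabola_stmt16_general (y₀ f₀ g₀ x y s σ₄ A B C D Ybar : ℝ)
    (hF : ‖pt f₀ g₀‖ < 1) (hP : ‖pt x y‖ < 1)
    (hyy : y ≠ y₀) (hne : pt x y ≠ pt f₀ g₀)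
    (hs : s = Real.sign (y₀ - y)) (hY : Ybar = 1 + s * y) (hσ : σ₄ = 1 + s * y₀)
    (hA : A = -2 * σ₄ * g₀ * s) (hB : B = -2 * σ₄ * f₀)
    (hC : C = 2 * σ₄ * (1 + s * g₀)) (hD : D = σ₄ ^ 2 * (f₀ ^ 2 + g₀ ^ 2 - 1)) :
    Real.log (rho y₀ y) = funkDist (pt x y) (pt f₀ g₀) ↔
      Ybar ^ 4 + x ^ 2 * Ybar ^ 2 - 2 * Ybar ^ 3 + A * Ybar ^ 2 + B * x * Ybar
        + C * Ybar + D = 0 := by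
  have hyy₀ : y₀ - y ≠ 0 := sub_ne_zero.mpr hyy.symm
  have hs₁ : s = -1 ∨ s = 1 := hs ▸ sign_apply_eq_of_ne_zero _ hyy₀
  have hy : y ^ 2 < 1 := by
    have := norm_pt_sq x y
    nlinarith [norm_nonneg (pt x y), sq_nonneg x]
  have hYpos : 0 < Ybar := by rcases hs₁ with rfl | rfl <;> nlinarith
  have hYσ : Ybar < σ₄ := by
    have := hs ▸ sign_mul_pos_of_ne_zero _ hyy₀
    linarith
  have hm : 0 < (f₀ - x) ^ 2 + (g₀ - y) ^ 2 := by
    rw [← norm_pt_sq, ← pt_sub, norm_sub_rev]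
    have := sub_ne_zero.mpr hne
    positivity
  rw [show rho y₀ y = σ₄ / Ybar by rw [rho, ← hs, hσ, hY],
    log_div_eq_funkDist_iff _ _ hYpos hYσ hP hF hne, ← sub_eq_zero]
  simp only [pt_sub, inner_pt, norm_pt_sq]
  rw [funk_parabola_quartic_factor x y f₀ g₀ s σ₄ Ybar hs₁ hY, mul_eq_zero, or_iff_right hm.ne',
    hA, hB, hC, hD]

/-- Type-4 Funk parabola: `d_F(s,P) = ln ρ(y₀,y) = d_F(P,F)` iff the quartic
`ȳ⁴ + x²ȳ² − 2ȳ³ + Aȳ² + Bxȳ + Cȳ + D = 0` holds, where `ȳ = 1 + sgn(y₀−y)·y`. -/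
theorem funk_parabola_stmt16 (y₀ f₀ g₀ x y s σ₄ A B C D Ybar : ℝ)
    (hy₀ : -1 < y₀ ∧ y₀ < 1) (hF : ‖pt f₀ g₀‖ < 1) (hP : ‖pt x y‖ < 1)
    (hyy : y ≠ y₀) (hne : pt x y ≠ pt f₀ g₀)
    (hs : s = Real.sign (y₀ - y)) (hY : Ybar = 1 + s * y) (hσ : σ₄ = 1 + s * y₀)
    (hA : A = -2 * σ₄ * g₀ * s) (hB : B = -2 * σ₄ * f₀)
    (hC : C = 2 * σ₄ * (1 + s * g₀)) (hD : D = σ₄ ^ 2 * (f₀ ^ 2 + g₀ ^ 2 - 1)) :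
    Real.log (rho y₀ y) = funkDist (pt x y) (pt f₀ g₀) ↔
      Ybar ^ 4 + x ^ 2 * Ybar ^ 2 - 2 * Ybar ^ 3 + A * Ybar ^ 2 + B * x * Ybar
        + C * Ybar + D = 0 :=
  funk_parabola_stmt16_general y₀ f₀ g₀ x y s σ₄ A B C D Ybar hF hP hyy hne hs hY hσ hA hB hC hD
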